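/- Suppose M and N are nonempty and the composition M[N] is E-definable. Then M[N] is semantically ∅-rigid if and only if both M and N are semantically ∅-rigid, and M[N] is syntactically ∅-rigid if and only if both M and N are syntactically ∅-rigid. -/

import Mathlib

open FirstOrder Language Set

universe u v w

variable (L : FirstOrder.Language.{u, v}) (M : Type w) [L.Structure M]

/-- The definable closure of `A`: the set of `b` such that `{b}` is definable
with parameters from `A`. -/
def dcl (A : Set M) : Set M := {b : M | A.Definable₁ L ({b} : Set M)}

/-- `M` is semantically `A`-rigid if every automorphism fixing `A` pointwise is the identity. -/
def SemRigid (A : Set M) : Prop :=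
  ∀ f : M ≃[L] M, (∀ a ∈ A, f a = a) → ∀ x : M, f x = x

/-- `M` is syntactically `A`-rigid if `dcl(A) = M`. -/
def SyntRigid (A : Set M) : Prop := dcl L M A = Set.univ

/-- The ∀-semantic degree of rigidity. -/
noncomputable def degForallSem : ℕ∞ :=
  sInf {n : ℕ∞ | ∃ m : ℕ, n = m ∧ ∀ A : Finset M, A.card = m → SemRigid L M ↑A}

/-- The ∃-semantic degree of rigidity. -/
noncomputable def degExistsSem : ℕ∞ :=
  sInf {n : ℕ∞ | ∃ m : ℕ, n = m ∧ ∃ A : Finset M, A.card = m ∧ SemRigid L M ↑A}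

/-- The ∀-syntactic degree of rigidity. -/
noncomputable def degForallSynt : ℕ∞ :=
  sInf {n : ℕ∞ | ∃ m : ℕ, n = m ∧ ∀ A : Finset M, A.card = m → SyntRigid L M ↑A}

/-- The ∃-syntactic degree of rigidity. -/
noncomputable def degExistsSynt : ℕ∞ :=
  sInf {n : ℕ∞ | ∃ m : ℕ, n = m ∧ ∃ A : Finset M, A.card = m ∧ SyntRigid L M ↑A}

universe u₁ v₁ u₂ v₂ w₁ w₂

variable (LM : FirstOrder.Language.{u₁, v₁}) (LN : FirstOrder.Language.{u₂, v₂})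
  (S : Type w₁) (T : Type w₂) [LM.Structure S] [LN.Structure T]

/-- The composition `S[T]` of the structures `S` and `T`: the structure on `S × T` in
the (disjoint) union language `Σ_S ∪ Σ_T` where a relation symbol of `Σ_S` holds of a
tuple iff it holds of the tuple of first coordinates in `S`, and a relation symbol of
`Σ_T` holds of a tuple iff all first coordinates agree and it holds of the tuple of
second coordinates in `T`. -/
instance compStructure [LM.IsRelational] [LN.IsRelational] :
    (LM.sum LN).Structure (S × T) where
  funMap f _ := Sum.casesOn f (fun f₁ => isEmptyElim f₁) (fun f₂ => isEmptyElim f₂)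
  RelMap r x :=
    Sum.casesOn r
      (fun rS => Structure.RelMap rS (fun i => (x i).1))
      (fun rT => (∀ i j, (x i).1 = (x j).1) ∧ Structure.RelMap rT (fun i => (x i).2))

/-- The composition `S[T]` is `E`-definable if the equivalence relation identifying the
copies of `T` (equality of first coordinates) is definable without parameters. -/
def EDefinable [LM.IsRelational] [LN.IsRelational] : Prop :=
  (∅ : Set (S × T)).Definable (LM.sum LN) {x : Fin 2 → S × T | (x 0).1 = (x 1).1}

/-!
Automorphisms: automorphisms of `S` and of `T` act coordinatewise on `S[T]`. Conversely, as `E` is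
`∅`-definable, an automorphism of `S[T]` permutes the fibres `{a} × T`; the induced permutation of
`S` is an automorphism, hence trivial when `S` is rigid, and then each fibre is mapped to itself by
an automorphism of `T`.

Definable closure: by induction on formulas (Feferman–Vaught), every formula of `S[T]` is
equivalent to a finite union of rectangles `φ(x.1) ∧ ψ(x.2)` with `φ` an `S`-formula and `ψ` a
`T`-formula, so a formula isolating `(a, b)` yields one rectangle whose sides isolate `a` and `b`.
Conversely, a formula isolating `a` in `S` is transferred to `S[T]` by reading `=` as the formula
defining `E`, and one isolating `b` in `T` by relativising its quantifiers to the `E`-class of the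
free variable.
-/

namespace FirstOrder.Language.Term

variable {L : Language} [L.IsRelational] {γ : Type*}

def varOf : L.Term γ → γ
  | var v => v
  | func f _ => isEmptyElim f

@[simp] theorem varOf_var (a : γ) : (var a : L.Term γ).varOf = a := rfl

@[simp] theorem realize_eq_varOf {M : Type*} [L.Structure M] (t : L.Term γ) (v : γ → M) :
    t.realize v = v t.varOf := by
  cases t with
  | var => rfl
  | func f => exact isEmptyElim f

end FirstOrder.Language.Term

theorem Set.Definable.comp_equiv_mem_iff {L : Language} {M : Type*} [L.Structure M] {α : Type*}
    {s : Set (α → M)} (hs : (∅ : Set M).Definable L s) (f : M ≃[L] M) (x : α → M) :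
    f ∘ x ∈ s ↔ x ∈ s := by
  obtain ⟨φ, rfl⟩ := Set.empty_definable_iff.1 hs
  exact StrongHomClass.realize_formula f φ

theorem mem_dcl_empty_iff {L : Language} {M : Type*} [L.Structure M] {b : M} :
    b ∈ dcl L M ∅ ↔ ∃ φ : L.Formula (Fin 1), ∀ x : Fin 1 → M, φ.Realize x ↔ x 0 = b := by
  simp only [dcl, Set.Definable₁, Set.mem_ofPred_eq, Set.empty_definable_iff, Set.ext_iff,
    Set.mem_singleton_iff]
  exact exists_congr fun φ => forall_congr' fun x => Iff.comm

theorem SyntRigid.mem_dcl {L : Language} {M : Type*} [L.Structure M] {A : Set M}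
    (h : SyntRigid L M A) (b : M) : b ∈ dcl L M A :=
  Set.eq_univ_iff_forall.1 h b

section Composition

variable {LM LN S T}

section Rectangles

variable {α : Type*} {n : ℕ} {v : α → S × T} {xs : Fin n → S × T}

/-- A list of pairs of formulas, read as the union of the rectangles `p.1(x.1) ∧ p.2(x.2)`. -/
def RealizeRects (l : List (LM.BoundedFormula α n × LN.BoundedFormula α n))
    (v : α → S × T) (xs : Fin n → S × T) : Prop :=
  ∃ p ∈ l, p.1.Realize (Prod.fst ∘ v) (Prod.fst ∘ xs) ∧ p.2.Realize (Prod.snd ∘ v) (Prod.snd ∘ xs)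

@[simp] theorem realizeRects_nil :
    ¬ RealizeRects ([] : List (LM.BoundedFormula α n × LN.BoundedFormula α n)) v xs := by
  simp [RealizeRects]

@[simp] theorem realizeRects_cons {p : LM.BoundedFormula α n × LN.BoundedFormula α n} {l} :
    RealizeRects (p :: l) v xs ↔
      (p.1.Realize (Prod.fst ∘ v) (Prod.fst ∘ xs) ∧ p.2.Realize (Prod.snd ∘ v) (Prod.snd ∘ xs)) ∨
        RealizeRects l v xs := by
  simp [RealizeRects]

@[simp] theorem realizeRects_append
    {l₁ l₂ : List (LM.BoundedFormula α n × LN.BoundedFormula α n)} :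
    RealizeRects (l₁ ++ l₂) v xs ↔ RealizeRects l₁ v xs ∨ RealizeRects l₂ v xs := by
  simp [RealizeRects, or_and_right, exists_or]

theorem realizeRects_flatMap {β : Type*} (l : List β)
    (f : β → List (LM.BoundedFormula α n × LN.BoundedFormula α n)) :
    RealizeRects (l.flatMap f) v xs ↔ ∃ b ∈ l, RealizeRects (f b) v xs := by
  simp only [RealizeRects, List.mem_flatMap]
  constructor
  · rintro ⟨p, ⟨b, hb, hp⟩, h⟩
    exact ⟨b, hb, p, hp, h⟩
  · rintro ⟨b, hb, p, hp, h⟩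
    exact ⟨p, ⟨b, hb, hp⟩, h⟩

variable (LM LN) in
/-- `(A × B)ᶜ ∩ (C × D) = ((Aᶜ ∩ C) × D) ∪ (C × (Bᶜ ∩ D))`, iterated over the list. -/
def rectsCompl : List (LM.BoundedFormula α n × LN.BoundedFormula α n) →
    List (LM.BoundedFormula α n × LN.BoundedFormula α n)
  | [] => [(⊤, ⊤)]
  | p :: l => (rectsCompl l).flatMap fun q => [(p.1.not ⊓ q.1, q.2), (q.1, p.2.not ⊓ q.2)]

variable (LM LN) in
def rectsEx (l : List (LM.BoundedFormula α (n + 1) × LN.BoundedFormula α (n + 1))) :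
    List (LM.BoundedFormula α n × LN.BoundedFormula α n) :=
  l.map fun p => (p.1.ex, p.2.ex)

@[simp] theorem realizeRects_compl (l : List (LM.BoundedFormula α n × LN.BoundedFormula α n)) :
    RealizeRects (rectsCompl LM LN l) v xs ↔ ¬ RealizeRects l v xs := by
  induction l with
  | nil => simp [rectsCompl, RealizeRects]
  | cons p l ih =>
    simp only [rectsCompl, realizeRects_flatMap, realizeRects_cons, realizeRects_nil, or_false,
      BoundedFormula.realize_inf, BoundedFormula.realize_not]
    rw [not_or, ← ih, RealizeRects]
    constructor
    · rintro ⟨q, hq, h⟩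
      exact ⟨by tauto, q, hq, by tauto⟩
    · rintro ⟨hp, q, hq, h⟩
      exact ⟨q, hq, by tauto⟩

@[simp] theorem realizeRects_ex
    (l : List (LM.BoundedFormula α (n + 1) × LN.BoundedFormula α (n + 1))) :
    RealizeRects (rectsEx LM LN l) v xs ↔ ∃ q : S × T, RealizeRects l v (Fin.snoc xs q) := by
  simp only [RealizeRects, rectsEx, List.mem_map, Prod.exists, Prod.mk.injEq, ↓existsAndEq,
    and_true, BoundedFormula.realize_ex, Fin.comp_snoc]
  constructor
  · rintro ⟨φ, ψ, hp, ⟨s, hs⟩, t, ht⟩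
    exact ⟨s, t, φ, ψ, hp, hs, ht⟩
  · rintro ⟨s, t, φ, ψ, hp, hs, ht⟩
    exact ⟨φ, ψ, hp, ⟨s, hs⟩, t, ht⟩

variable [LM.IsRelational] [LN.IsRelational]

@[simp] theorem relMap_inl_prod {k : ℕ} (r : LM.Relations k) (x : Fin k → S × T) :
    Structure.RelMap (L := LM.sum LN) (Sum.inl r) x ↔ Structure.RelMap r fun i => (x i).1 :=
  Iff.rfl

@[simp] theorem relMap_inr_prod {k : ℕ} (r : LN.Relations k) (x : Fin k → S × T) :
    Structure.RelMap (L := LM.sum LN) (Sum.inr r) x ↔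
      (∀ i j, (x i).1 = (x j).1) ∧ Structure.RelMap r fun i => (x i).2 :=
  Iff.rfl

theorem exists_rects_iff_realize (φ : (LM.sum LN).BoundedFormula α n) :
    ∃ l : List (LM.BoundedFormula α n × LN.BoundedFormula α n),
      ∀ (v : α → S × T) (xs : Fin n → S × T), φ.Realize v xs ↔ RealizeRects l v xs := by
  induction φ with
  | falsum => exact ⟨[], by simp [BoundedFormula.Realize]⟩
  | equal t₁ t₂ =>
    refine ⟨[(.equal (.var t₁.varOf) (.var t₂.varOf), .equal (.var t₁.varOf) (.var t₂.varOf))],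
      fun v xs => ?_⟩
    simp [BoundedFormula.Realize, ← Sum.comp_elim, Prod.ext_iff]
  | rel R ts =>
    rcases R with R | R
    · refine ⟨[(.rel R fun j => .var (ts j).varOf, ⊤)], fun v xs => ?_⟩
      simp [BoundedFormula.Realize, ← Sum.comp_elim]
    · refine ⟨[(BoundedFormula.iInf fun q : Fin _ × Fin _ =>
          .equal (.var (ts q.1).varOf) (.var (ts q.2).varOf), .rel R fun j => .var (ts j).varOf)],
        fun v xs => ?_⟩
      simp [BoundedFormula.Realize, ← Sum.comp_elim]
  | imp φ ψ ihφ ihψ =>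
    obtain ⟨l₁, h₁⟩ := ihφ
    obtain ⟨l₂, h₂⟩ := ihψ
    exact ⟨rectsCompl LM LN l₁ ++ l₂, fun v xs => by simp [h₁, h₂, imp_iff_not_or]⟩
  | all φ ih =>
    obtain ⟨l, h⟩ := ih
    exact ⟨rectsCompl LM LN (rectsEx LM LN (rectsCompl LM LN l)), fun v xs => by simp [h]⟩

theorem exists_rects_iff_formula_realize (φ : (LM.sum LN).Formula α) :
    ∃ l : List (LM.Formula α × LN.Formula α), ∀ v : α → S × T,
      φ.Realize v ↔ ∃ p ∈ l, p.1.Realize (Prod.fst ∘ v) ∧ p.2.Realize (Prod.snd ∘ v) := by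
  obtain ⟨l, hl⟩ := exists_rects_iff_realize (S := S) (T := T) φ
  refine ⟨l, fun v => (hl v default).trans ?_⟩
  simp only [RealizeRects, Formula.Realize, Subsingleton.elim (_ ∘ default) default]

end Rectangles

section Translations

variable [LM.IsRelational] [LN.IsRelational] {α : Type*}
  {ε : (LM.sum LN).Formula (Fin 2)} (hε : ∀ x : Fin 2 → S × T, ε.Realize x ↔ (x 0).1 = (x 1).1)

include hε in
theorem realize_relabel_of_defines_fst_eq {n : ℕ} (g : Fin 2 → α ⊕ Fin n) (v : α → S × T)
    (xs : Fin n → S × T) :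
    (BoundedFormula.relabel g ε).Realize v xs ↔
      (Sum.elim v xs (g 0)).1 = (Sum.elim v xs (g 1)).1 := by
  rw [BoundedFormula.realize_relabel]
  convert hε (Sum.elim v xs ∘ g) using 1
  exacts [iff_of_eq (congrArg _ (Subsingleton.elim _ _)), Iff.rfl]

namespace FirstOrder.Language.BoundedFormula

variable (LN) in
/-- An `LM`-formula read in `S[T]`, with `=` interpreted by `ε`. -/
def compLeft (ε : (LM.sum LN).Formula (Fin 2)) :
    ∀ {n : ℕ}, LM.BoundedFormula α n → (LM.sum LN).BoundedFormula α n
  | _, falsum => falsum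
  | _, equal t₁ t₂ => relabel ![t₁.varOf, t₂.varOf] ε
  | _, rel R ts => rel (Sum.inl R) fun i => var (ts i).varOf
  | _, imp φ ψ => (compLeft ε φ).imp (compLeft ε ψ)
  | _, all φ => (compLeft ε φ).all

variable (LM) in
/-- An `LN`-formula read in `S[T]`, with quantifiers relativised by `ε` to the fibre of `i₀`. -/
def compFiber (ε : (LM.sum LN).Formula (Fin 2)) (i₀ : α) :
    ∀ {n : ℕ}, LN.BoundedFormula α n → (LM.sum LN).BoundedFormula α n
  | _, falsum => falsum
  | _, equal t₁ t₂ => equal (var t₁.varOf) (var t₂.varOf)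
  | _, rel R ts => rel (Sum.inr R) fun i => var (ts i).varOf
  | _, imp φ ψ => (compFiber ε i₀ φ).imp (compFiber ε i₀ ψ)
  | n, all φ => ((relabel ![Sum.inr (Fin.last n), Sum.inl i₀] ε).imp (compFiber ε i₀ φ)).all

include hε in
theorem realize_compLeft [Nonempty T] {n : ℕ} (φ : LM.BoundedFormula α n) (v : α → S × T)
    (xs : Fin n → S × T) :
    (compLeft LN ε φ).Realize v xs ↔ φ.Realize (Prod.fst ∘ v) (Prod.fst ∘ xs) := by
  induction φ with
  | falsum => rfl
  | equal t₁ t₂ =>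
    simp [compLeft, realize_relabel_of_defines_fst_eq hε, BoundedFormula.Realize, ← Sum.comp_elim]
  | rel R ts => simp [compLeft, BoundedFormula.Realize, ← Sum.comp_elim]
  | imp φ ψ ihφ ihψ => simp only [compLeft, realize_imp, ihφ, ihψ]
  | all φ ih =>
    simp only [compLeft, realize_all, ih, Fin.comp_snoc]
    inhabit T
    exact ⟨fun h s => h (s, default), fun h q => h q.1⟩

include hε in
theorem realize_compFiber {n : ℕ} (i₀ : α) (φ : LN.BoundedFormula α n) (a : S) (v : α → S × T)
    (xs : Fin n → S × T) (hv : ∀ i, (v i).1 = a) (hxs : ∀ i, (xs i).1 = a) :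
    (compFiber LM ε i₀ φ).Realize v xs ↔ φ.Realize (Prod.snd ∘ v) (Prod.snd ∘ xs) := by
  induction φ with
  | falsum => rfl
  | equal t₁ t₂ =>
    have hfst : ∀ w, (Sum.elim v xs w).1 = a := Sum.forall.2 ⟨hv, hxs⟩
    simp [compFiber, BoundedFormula.Realize, ← Sum.comp_elim, Prod.ext_iff, hfst]
  | rel R ts =>
    have hfst : ∀ w, (Sum.elim v xs w).1 = a := Sum.forall.2 ⟨hv, hxs⟩
    simp [compFiber, BoundedFormula.Realize, ← Sum.comp_elim, hfst]
  | imp φ ψ ihφ ihψ => simp only [compFiber, realize_imp, ihφ xs hxs, ihψ xs hxs]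
  | @all m φ ih =>
    simp only [compFiber, realize_all, realize_imp, realize_relabel_of_defines_fst_eq hε,
      Matrix.cons_val_zero, Matrix.cons_val_one, Sum.elim_inr, Sum.elim_inl,
      Fin.snoc_last, hv]
    have hsnoc (q : S × T) (hq : q.1 = a) : ∀ i, ((Fin.snoc xs q : Fin (m + 1) → S × T) i).1 = a :=
      Fin.lastCases (by simp [hq]) (by simp [hxs])
    constructor
    · intro h t
      simpa [ih _ (hsnoc (a, t) rfl), Fin.comp_snoc] using h (a, t) rfl
    · intro h q hq
      rw [ih _ (hsnoc q hq), Fin.comp_snoc]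
      exact h q.2

end FirstOrder.Language.BoundedFormula

end Translations

section Rigidity

variable [LM.IsRelational] [LN.IsRelational]

def FirstOrder.Language.Equiv.compCongr {S' T' : Type*} [LM.Structure S'] [LN.Structure T']
    (g : S ≃[LM] S') (h : T ≃[LN] T') : (S × T) ≃[LM.sum LN] (S' × T') where
  toEquiv := g.toEquiv.prodCongr h.toEquiv
  map_fun' f := isEmptyElim f
  map_rel' := by
    rintro n (r | r) x
    · exact g.map_rel r _
    · exact and_congr (forall₂_congr fun i j => g.injective.eq_iff) (h.map_rel r _)

theorem SemRigid.left_of_comp [Nonempty T] (h : SemRigid (LM.sum LN) (S × T) ∅) :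
    SemRigid LM S ∅ := fun g _ a => by
  inhabit T
  exact congrArg Prod.fst (h (g.compCongr (.refl LN T)) (by simp) (a, default))

theorem SemRigid.right_of_comp [Nonempty S] (h : SemRigid (LM.sum LN) (S × T) ∅) :
    SemRigid LN T ∅ := fun g _ b => by
  inhabit S
  exact congrArg Prod.snd (h ((Language.Equiv.refl LM S).compCongr g) (by simp) (default, b))

theorem EDefinable.fst_apply_eq_iff (hE : EDefinable LM LN S T)
    (f : (S × T) ≃[LM.sum LN] (S × T)) (x y : S × T) : (f x).1 = (f y).1 ↔ x.1 = y.1 := by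
  simpa using hE.comp_equiv_mem_iff f ![x, y]

theorem EDefinable.exists_formula (hE : EDefinable LM LN S T) :
    ∃ ε : (LM.sum LN).Formula (Fin 2), ∀ x : Fin 2 → S × T, ε.Realize x ↔ (x 0).1 = (x 1).1 := by
  obtain ⟨ε, hε⟩ := Set.empty_definable_iff.1 hE
  exact ⟨ε, fun x => (Set.ext_iff.1 hε x).symm⟩

theorem fst_apply_eq_of_semRigid [Nonempty T] (hS : SemRigid LM S ∅)
    (f : (S × T) ≃[LM.sum LN] (S × T)) (hf : ∀ x y, (f x).1 = (f y).1 ↔ x.1 = y.1)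
    (x : S × T) : (f x).1 = x.1 := by
  inhabit T
  let g : S → S := fun a => (f (a, default)).1
  have hg : ∀ y, g y.1 = (f y).1 := fun y => (hf _ _).2 rfl
  have hbij : Function.Bijective g := by
    refine ⟨fun a a' h => (hf (a, default) (a', default)).1 h, fun s => ?_⟩
    obtain ⟨y, hy⟩ := f.surjective (s, default)
    exact ⟨y.1, by rw [hg, hy]⟩
  let gS : S ≃[LM] S :=
    { toEquiv := .ofBijective g hbij
      map_fun' := fun f => isEmptyElim f
      map_rel' := fun r xs => f.map_rel (Sum.inl r) fun i => (xs i, default) }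
  rw [← hg]
  exact hS gS (by simp) x.1

theorem snd_apply_eq_of_semRigid (hT : SemRigid LN T ∅) (f : (S × T) ≃[LM.sum LN] (S × T))
    (hf : ∀ x, (f x).1 = x.1) (x : S × T) : (f x).2 = x.2 := by
  obtain ⟨a, t⟩ := x
  let h : T → T := fun t => (f (a, t)).2
  have hfa : ∀ t, f (a, t) = (a, h t) := fun t => Prod.ext (hf _) rfl
  have hbij : Function.Bijective h := by
    refine ⟨fun t t' e => ?_, fun t' => ?_⟩
    · exact congrArg Prod.snd (f.injective ((hfa t).trans (e ▸ (hfa t').symm)))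
    · obtain ⟨y, hy⟩ := f.surjective (a, t')
      have hy1 : y.1 = a := (hf y).symm.trans (congrArg Prod.fst hy)
      exact ⟨y.2, show (f (a, y.2)).2 = t' by rw [← hy1, hy]⟩
  let hT' : T ≃[LN] T :=
    { toEquiv := .ofBijective h hbij
      map_fun' := fun f => isEmptyElim f
      map_rel' := fun r xs => by
        simpa [Function.comp_def, hfa] using f.map_rel (Sum.inr r) fun i => (a, xs i) }
  exact hT hT' (by simp) t

theorem SemRigid.comp [Nonempty T] (hE : EDefinable LM LN S T) (hS : SemRigid LM S ∅)
    (hT : SemRigid LN T ∅) : SemRigid (LM.sum LN) (S × T) ∅ := fun f _ x =>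
  have hfst := fst_apply_eq_of_semRigid hS f (hE.fst_apply_eq_iff f)
  Prod.ext (hfst x) (snd_apply_eq_of_semRigid hT f hfst x)

theorem mem_dcl_of_mem_dcl_comp {a : S} {b : T} (h : (a, b) ∈ dcl (LM.sum LN) (S × T) ∅) :
    a ∈ dcl LM S ∅ ∧ b ∈ dcl LN T ∅ := by
  obtain ⟨φ, hφ⟩ := mem_dcl_empty_iff.1 h
  obtain ⟨l, hl⟩ := exists_rects_iff_formula_realize (S := S) (T := T) φ
  obtain ⟨p, hp, ha, hb⟩ := (hl _).1 ((hφ fun _ => (a, b)).2 rfl)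
  constructor
  · refine mem_dcl_empty_iff.2 ⟨p.1, fun y => ⟨fun hy => ?_, fun hy => ?_⟩⟩
    · exact congrArg Prod.fst ((hφ fun i => (y i, b)).1 ((hl _).2 ⟨p, hp, hy, hb⟩))
    · obtain rfl : y = fun _ => a := funext (Fin.forall_fin_one.2 hy)
      exact ha
  · refine mem_dcl_empty_iff.2 ⟨p.2, fun y => ⟨fun hy => ?_, fun hy => ?_⟩⟩
    · exact congrArg Prod.snd ((hφ fun i => (a, y i)).1 ((hl _).2 ⟨p, hp, ha, hy⟩))
    · obtain rfl : y = fun _ => b := funext (Fin.forall_fin_one.2 hy)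
      exact hb

theorem SyntRigid.left_of_comp [Nonempty T] (h : SyntRigid (LM.sum LN) (S × T) ∅) :
    SyntRigid LM S ∅ := by
  inhabit T
  exact Set.eq_univ_of_forall fun a => (mem_dcl_of_mem_dcl_comp (h.mem_dcl (a, default))).1

theorem SyntRigid.right_of_comp [Nonempty S] (h : SyntRigid (LM.sum LN) (S × T) ∅) :
    SyntRigid LN T ∅ := by
  inhabit S
  exact Set.eq_univ_of_forall fun b => (mem_dcl_of_mem_dcl_comp (h.mem_dcl (default, b))).2

theorem mem_dcl_comp [Nonempty T] (hE : EDefinable LM LN S T) {a : S} {b : T}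
    (ha : a ∈ dcl LM S ∅) (hb : b ∈ dcl LN T ∅) : (a, b) ∈ dcl (LM.sum LN) (S × T) ∅ := by
  obtain ⟨ε, hε⟩ := hE.exists_formula
  obtain ⟨φ, hφ⟩ := mem_dcl_empty_iff.1 ha
  obtain ⟨ψ, hψ⟩ := mem_dcl_empty_iff.1 hb
  refine mem_dcl_empty_iff.2 ⟨.compLeft LN ε φ ⊓ .compFiber LM ε 0 ψ, fun x => ?_⟩
  rw [Formula.realize_inf, Prod.ext_iff]
  refine and_congr ((BoundedFormula.realize_compLeft hε φ x default).trans ?_)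
    ((BoundedFormula.realize_compFiber hε 0 ψ (x 0).1 x default
      (Fin.forall_fin_one.2 rfl) finZeroElim).trans ?_)
  · rw [Subsingleton.elim (_ ∘ default) default]
    exact hφ _
  · rw [Subsingleton.elim (_ ∘ default) default]
    exact hψ _

theorem SyntRigid.comp [Nonempty T] (hE : EDefinable LM LN S T) (hS : SyntRigid LM S ∅)
    (hT : SyntRigid LN T ∅) : SyntRigid (LM.sum LN) (S × T) ∅ :=
  Set.eq_univ_of_forall fun x => mem_dcl_comp hE (hS.mem_dcl x.1) (hT.mem_dcl x.2)

end Rigidity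

end Composition

/-- For nonempty `S`, `T` with `E`-definable composition, `S[T]` is semantically
(resp. syntactically) ∅-rigid iff both `S` and `T` are. -/
theorem stmt_19 [LM.IsRelational] [LN.IsRelational] [Nonempty S] [Nonempty T]
    (hE : EDefinable LM LN S T) :
    (SemRigid (LM.sum LN) (S × T) (∅ : Set (S × T)) ↔
      SemRigid LM S (∅ : Set S) ∧ SemRigid LN T (∅ : Set T)) ∧
    (SyntRigid (LM.sum LN) (S × T) (∅ : Set (S × T)) ↔
      SyntRigid LM S (∅ : Set S) ∧ SyntRigid LN T (∅ : Set T)) :=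
  ⟨⟨fun h => ⟨h.left_of_comp, h.right_of_comp⟩, fun h => .comp hE h.1 h.2⟩,
    ⟨fun h => ⟨h.left_of_comp, h.right_of_comp⟩, fun h => .comp hE h.1 h.2⟩⟩
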